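/- Let M ∈ 𝒞_H(α,β), N ∈ 𝒞_H(γ,δ). The braiding c_{M,N}(m ⊗ n) = n₍₀₎ ⊗ β⁻¹(n₍₁₎)·m is a morphism of H-comodules, i.e., it commutes with the right H-comodule structures on M ⊗ N (given by (m ⊗ n) ↦ (m₍₀₎ ⊗ n₍₀₎) ⊗ n₍₁₎m₍₁₎) and on ᴹN ⊗ M. -/
import Mathlib


open TensorProduct

/-- The data of a Hopf quasigroup without its antipode: a unital (possibly nonassociative)
algebra together with a coassociative counital comultiplication which, together with the
counit, is an algebra homomorphism. Everything is expressed in terms of linear maps, so that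
Sweedler-notation identities become equalities of composites of linear maps. -/
structure HopfQuasigroupData (k H : Type*) [Field k] [AddCommGroup H] [Module k H] where
  mul : H ⊗[k] H →ₗ[k] H
  one : H
  comul : H →ₗ[k] H ⊗[k] H
  counit : H →ₗ[k] k
  one_mul : ∀ x : H, mul (one ⊗ₜ[k] x) = x
  mul_one : ∀ x : H, mul (x ⊗ₜ[k] one) = x
  coassoc : (TensorProduct.assoc k H H H).toLinearMap ∘ₗ comul.rTensor H ∘ₗ comul =
    comul.lTensor H ∘ₗ comul
  counit_comul : (TensorProduct.lid k H).toLinearMap ∘ₗ counit.rTensor H ∘ₗ comul =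
    LinearMap.id
  comul_counit : (TensorProduct.rid k H).toLinearMap ∘ₗ counit.lTensor H ∘ₗ comul =
    LinearMap.id
  comul_mul : comul ∘ₗ mul = TensorProduct.map mul mul ∘ₗ
    (TensorProduct.tensorTensorTensorComm k H H H H).toLinearMap ∘ₗ
      TensorProduct.map comul comul
  comul_one : comul one = one ⊗ₜ[k] one
  counit_mul : ∀ x y : H, counit (mul (x ⊗ₜ[k] y)) = counit x * counit y
  counit_one : counit one = 1

namespace HopfQuasigroupData

variable {k H : Type*} [Field k] [AddCommGroup H] [Module k H]

/-- The linear map `h ⊗ g ↦ ε(h)g`. -/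
noncomputable def εl (D : HopfQuasigroupData k H) : H ⊗[k] H →ₗ[k] H :=
  (TensorProduct.lid k H).toLinearMap ∘ₗ D.counit.rTensor H

/-- The linear map `g ⊗ h ↦ ε(h)g`. -/
noncomputable def εr (D : HopfQuasigroupData k H) : H ⊗[k] H →ₗ[k] H :=
  (TensorProduct.rid k H).toLinearMap ∘ₗ D.counit.lTensor H

/-- `S` is an antipode for the Hopf quasigroup data `D`. -/
def IsAntipode (D : HopfQuasigroupData k H) (S : H →ₗ[k] H) : Prop :=
  (D.mul ∘ₗ TensorProduct.map S D.mul ∘ₗ (TensorProduct.assoc k H H H).toLinearMap ∘ₗ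
      D.comul.rTensor H = D.εl) ∧
  (D.mul ∘ₗ TensorProduct.map LinearMap.id (D.mul ∘ₗ S.rTensor H) ∘ₗ
      (TensorProduct.assoc k H H H).toLinearMap ∘ₗ D.comul.rTensor H = D.εl) ∧
  (D.mul ∘ₗ TensorProduct.map (D.mul ∘ₗ S.lTensor H) LinearMap.id ∘ₗ
      (TensorProduct.assoc k H H H).symm.toLinearMap ∘ₗ D.comul.lTensor H = D.εr) ∧
  (D.mul ∘ₗ TensorProduct.map D.mul S ∘ₗ
      (TensorProduct.assoc k H H H).symm.toLinearMap ∘ₗ D.comul.lTensor H = D.εr)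

end HopfQuasigroupData

/-- An automorphism of a Hopf quasigroup `(D, S)`: a linear automorphism which is an algebra
and coalgebra morphism and commutes with the antipode. -/
structure HopfQuasigroupAut {k H : Type*} [Field k] [AddCommGroup H] [Module k H]
    (D : HopfQuasigroupData k H) (S : H →ₗ[k] H) where
  toLinearEquiv : H ≃ₗ[k] H
  map_mul : toLinearEquiv.toLinearMap ∘ₗ D.mul =
    D.mul ∘ₗ TensorProduct.map toLinearEquiv.toLinearMap toLinearEquiv.toLinearMap
  map_one : toLinearEquiv D.one = D.one
  map_comul : D.comul ∘ₗ toLinearEquiv.toLinearMap =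
    TensorProduct.map toLinearEquiv.toLinearMap toLinearEquiv.toLinearMap ∘ₗ D.comul
  map_counit : D.counit ∘ₗ toLinearEquiv.toLinearMap = D.counit
  comm_antipode : toLinearEquiv.toLinearMap ∘ₗ S = S ∘ₗ toLinearEquiv.toLinearMap

namespace HopfQuasigroupAut

variable {k H : Type*} [Field k] [AddCommGroup H] [Module k H]
  {D : HopfQuasigroupData k H} {S : H →ₗ[k] H}

/-- The underlying linear map of a Hopf quasigroup automorphism. -/
def lmap (α : HopfQuasigroupAut D S) : H →ₗ[k] H := α.toLinearEquiv.toLinearMap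

/-- The underlying linear map of the inverse of a Hopf quasigroup automorphism. -/
def invmap (α : HopfQuasigroupAut D S) : H →ₗ[k] H := α.toLinearEquiv.symm.toLinearMap

end HopfQuasigroupAut

section Quasimodules

variable {k H M : Type*} [Field k] [AddCommGroup H] [Module k H]
  [AddCommGroup M] [Module k M]

/-- The linear map `h ⊗ m ↦ ε(h)m`. -/
noncomputable def εAct (D : HopfQuasigroupData k H) (M : Type*) [AddCommGroup M]
    [Module k M] : H ⊗[k] M →ₗ[k] M :=
  (TensorProduct.lid k M).toLinearMap ∘ₗ D.counit.rTensor M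

/-- `act` makes `M` a left quasimodule over the Hopf quasigroup `(D, S)`:
`1·m = m` and `Σ h₁·(S(h₂)·m) = Σ S(h₁)·(h₂·m) = ε(h)m`. -/
def IsQuasimodule (D : HopfQuasigroupData k H) (S : H →ₗ[k] H)
    (act : H ⊗[k] M →ₗ[k] M) : Prop :=
  (∀ m : M, act (D.one ⊗ₜ[k] m) = m) ∧
  (act ∘ₗ (act ∘ₗ S.rTensor M).lTensor H ∘ₗ (TensorProduct.assoc k H H M).toLinearMap ∘ₗ
      D.comul.rTensor M = εAct D M) ∧
  (act ∘ₗ S.rTensor M ∘ₗ act.lTensor H ∘ₗ (TensorProduct.assoc k H H M).toLinearMap ∘ₗ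
      D.comul.rTensor M = εAct D M)

/-- `coact` makes `M` a (counital, coassociative) right comodule over `D`. -/
def IsComodule (D : HopfQuasigroupData k H) (coact : M →ₗ[k] M ⊗[k] H) : Prop :=
  ((TensorProduct.rid k M).toLinearMap ∘ₗ D.counit.lTensor M ∘ₗ coact = LinearMap.id) ∧
  (coact.rTensor H ∘ₗ coact =
    (TensorProduct.assoc k M H H).symm.toLinearMap ∘ₗ D.comul.lTensor M ∘ₗ coact)

/-- The shuffle `(h₁ ⊗ (h₂₁ ⊗ h₂₂)) ⊗ (m₀ ⊗ m₁) ↦ (h₂₁ ⊗ m₀) ⊗ ((h₂₂ ⊗ m₁) ⊗ h₁)`. -/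
noncomputable def ydShuffle (k H M : Type*) [Field k] [AddCommGroup H] [Module k H]
    [AddCommGroup M] [Module k M] :
    (H ⊗[k] (H ⊗[k] H)) ⊗[k] (M ⊗[k] H) →ₗ[k] (H ⊗[k] M) ⊗[k] ((H ⊗[k] H) ⊗[k] H) :=
  (TensorProduct.assoc k (H ⊗[k] M) (H ⊗[k] H) H).toLinearMap ∘ₗ
    (TensorProduct.comm k H ((H ⊗[k] M) ⊗[k] (H ⊗[k] H))).toLinearMap ∘ₗ
      ((TensorProduct.tensorTensorTensorComm k H H M H).toLinearMap.lTensor H) ∘ₗ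
        (TensorProduct.assoc k H (H ⊗[k] H) (M ⊗[k] H)).toLinearMap

/-- The `(α,β)`-Yetter–Drinfeld quasimodule compatibility condition (Eq. (5.1)):
`ρ(h·m) = Σ h₂₁·m₀ ⊗ (β(h₂₂)m₁)α(S⁻¹(h₁))`. -/
noncomputable def YDCompat (D : HopfQuasigroupData k H) (Sinv : H →ₗ[k] H)
    (α β : H →ₗ[k] H) (act : H ⊗[k] M →ₗ[k] M) (coact : M →ₗ[k] M ⊗[k] H) : Prop :=
  coact ∘ₗ act =
    TensorProduct.map act
        (D.mul ∘ₗ TensorProduct.map (D.mul ∘ₗ β.rTensor H) (α ∘ₗ Sinv)) ∘ₗ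
      ydShuffle k H M ∘ₗ coact.lTensor (H ⊗[k] (H ⊗[k] H)) ∘ₗ
        (D.comul.lTensor H).rTensor M ∘ₗ D.comul.rTensor M

end Quasimodules

section Braiding

variable (k : Type*) {H : Type*} (M N : Type*) [Field k] [AddCommGroup H] [Module k H]
  [AddCommGroup M] [Module k M] [AddCommGroup N] [Module k N]

/-- The braiding `c_{M,N}(m ⊗ n) = n₀ ⊗ β⁻¹(n₁)·m` (for `M ∈ 𝒞_H(α,β)`). -/
noncomputable def braiding (βinv : H →ₗ[k] H) (actM : H ⊗[k] M →ₗ[k] M)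
    (coactN : N →ₗ[k] N ⊗[k] H) : M ⊗[k] N →ₗ[k] N ⊗[k] M :=
  (actM ∘ₗ βinv.rTensor M).lTensor N ∘ₗ (TensorProduct.assoc k N H M).toLinearMap ∘ₗ
    coactN.rTensor M ∘ₗ (TensorProduct.comm k M N).toLinearMap

/-- The inverse braiding `c⁻¹(n ⊗ m) = β⁻¹(S(n₁))·m ⊗ n₀`. -/
noncomputable def braidingInv (βinv S : H →ₗ[k] H) (actM : H ⊗[k] M →ₗ[k] M)
    (coactN : N →ₗ[k] N ⊗[k] H) : N ⊗[k] M →ₗ[k] M ⊗[k] N :=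
  TensorProduct.map (actM ∘ₗ (βinv ∘ₗ S).rTensor M) LinearMap.id ∘ₗ
    (TensorProduct.comm k N (H ⊗[k] M)).toLinearMap ∘ₗ
      (TensorProduct.assoc k N H M).toLinearMap ∘ₗ coactN.rTensor M

end Braiding

section AuxProofs

open TensorProduct LinearMap

variable {k H : Type*} [Field k] [AddCommGroup H] [Module k H]

namespace HopfQuasigroupData

variable (D : HopfQuasigroupData k H)

lemma el_apply (x y : H) : D.εl (x ⊗ₜ[k] y) = D.counit x • y := by
  simp [HopfQuasigroupData.εl]

lemma er_apply (x y : H) : D.εr (x ⊗ₜ[k] y) = D.counit y • x := by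
  simp [HopfQuasigroupData.εr]

lemma el_comul (h : H) : D.εl (D.comul h) = h := by
  have := congrArg (fun f : H →ₗ[k] H => f h) D.counit_comul
  simpa [HopfQuasigroupData.εl] using this

lemma er_comul (h : H) : D.εr (D.comul h) = h := by
  have := congrArg (fun f : H →ₗ[k] H => f h) D.comul_counit
  simpa [HopfQuasigroupData.εr] using this

lemma coassoc_apply (h : H) :
    (TensorProduct.assoc k H H H) ((D.comul.rTensor H) (D.comul h)) =
      (D.comul.lTensor H) (D.comul h) := by
  have := congrArg (fun f => f h) D.coassoc
  simpa using this

lemma comul_mul_apply (x y : H) :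
    D.comul (D.mul (x ⊗ₜ[k] y)) =
      (TensorProduct.map D.mul D.mul)
        ((TensorProduct.tensorTensorTensorComm k H H H H) (D.comul x ⊗ₜ[k] D.comul y)) := by
  have := congrArg (fun f => f (x ⊗ₜ[k] y)) D.comul_mul
  simpa using this

variable (S : H →ₗ[k] H)

/-- `Σ g₁ (S(h g₂)) = ε(g) S(h)` : linearization of `y (xy)⁻¹ = x⁻¹` in IP loops. -/
lemma lemma_L1 (hS : D.IsAntipode S) (h g : H) :
    D.mul ((LinearMap.lTensor H (S ∘ₗ D.mul ∘ₗ TensorProduct.mk k H H h)) (D.comul g))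
      = D.counit g • S h := by
  classical
  set A := (TensorProduct.assoc k H H H).toLinearMap
  -- the sandwich element E = Σ (S h₁ (h₂ g₁)) S(h₃ g₂) in A4-grouped form
  set X : H ⊗[k] H :=
    (TensorProduct.map S D.mul) ((TensorProduct.assoc k H H H) ((D.comul h) ⊗ₜ[k] g)) with hX
  set E : H :=
    D.mul ((TensorProduct.map D.mul S)
      ((TensorProduct.assoc k H H H).symm ((LinearMap.lTensor H D.comul) X))) with hE
  -- Evaluation 1 : via the fourth antipode identity, E = ε(g) • S h
  have hE1 : E = D.counit g • S h := by
    have h4 := congrArg (fun F : H ⊗[k] H →ₗ[k] H => F X) hS.2.2.2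
    simp only [LinearMap.comp_apply, LinearEquiv.coe_coe] at h4
    have step : ∀ t : H ⊗[k] H,
        D.εr ((TensorProduct.map S D.mul) ((TensorProduct.assoc k H H H) (t ⊗ₜ[k] g)))
          = D.counit g • S (D.εr t) := by
      intro t
      induction t using TensorProduct.induction_on with
      | zero => simp
      | tmul a b =>
          simp [D.er_apply, D.counit_mul, smul_smul, mul_comm]
      | add x y hx hy =>
          simp only [add_tmul, map_add, hx, hy, smul_add]
    rw [hE, h4, hX, step (D.comul h), D.er_comul]
  -- Evaluation 2 : E equals the left-hand side of L1
  have hE2 : E =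
      D.mul ((LinearMap.lTensor H (S ∘ₗ D.mul ∘ₗ TensorProduct.mk k H H h)) (D.comul g)) := by
    set Ξ₁ : ((H ⊗[k] (H ⊗[k] H)) ⊗[k] (H ⊗[k] H)) →ₗ[k] H :=
      D.mul ∘ₗ
        TensorProduct.map (D.mul ∘ₗ TensorProduct.map S D.mul ∘ₗ
            (TensorProduct.assoc k H H H).toLinearMap) (S ∘ₗ D.mul) ∘ₗ
          (TensorProduct.tensorTensorTensorComm k (H ⊗[k] H) H H H).toLinearMap ∘ₗ
            ((TensorProduct.assoc k H H H).symm.toLinearMap.rTensor (H ⊗[k] H)) with hΞ₁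
    have hΞ₁app : ∀ (a b c u v : H),
        Ξ₁ ((a ⊗ₜ[k] (b ⊗ₜ[k] c)) ⊗ₜ[k] (u ⊗ₜ[k] v)) =
          D.mul ((D.mul (S a ⊗ₜ[k] D.mul (b ⊗ₜ[k] u))) ⊗ₜ[k] (S (D.mul (c ⊗ₜ[k] v)))) := by
      intro a b c u v
      simp [hΞ₁]
    -- c2a : unfold E into Ξ₁ applied to ((id ⊗ Δ)(Δ h)) ⊗ (Δ g)
    have c2a : ∀ t : H ⊗[k] H,
        D.mul ((TensorProduct.map D.mul S)
          ((TensorProduct.assoc k H H H).symm ((LinearMap.lTensor H D.comul)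
            ((TensorProduct.map S D.mul) ((TensorProduct.assoc k H H H) (t ⊗ₜ[k] g))))))
        = Ξ₁ (((LinearMap.lTensor H D.comul) t) ⊗ₜ[k] (D.comul g)) := by
      intro t
      induction t using TensorProduct.induction_on with
      | zero => simp
      | tmul x y =>
          simp only [LinearEquiv.coe_coe, TensorProduct.assoc_tmul, TensorProduct.map_tmul,
            LinearMap.lTensor_tmul]
          rw [D.comul_mul_apply y g]
          generalize D.comul y = r
          generalize D.comul g = s
          induction r using TensorProduct.induction_on with
          | zero => simp
          | tmul p q =>
              induction s using TensorProduct.induction_on with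
              | zero => simp
              | tmul u v => simp [hΞ₁]
              | add s1 s2 hs1 hs2 =>
                  simp only [tmul_add, map_add, hs1, hs2]
          | add r1 r2 hr1 hr2 =>
              simp only [add_tmul, map_add, tmul_add, hr1, hr2]
      | add x y hx hy =>
          simp only [add_tmul, map_add, hx, hy]
    have c2b : E = Ξ₁ (((TensorProduct.assoc k H H H)
        ((D.comul.rTensor H) (D.comul h))) ⊗ₜ[k] (D.comul g)) := by
      rw [hE, hX, c2a (D.comul h), D.coassoc_apply]
    -- c2c : apply the first antipode identity
    set Ξ₃ : ((H ⊗[k] H) ⊗[k] (H ⊗[k] H)) →ₗ[k] H :=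
      D.mul ∘ₗ TensorProduct.map D.εl (S ∘ₗ D.mul) ∘ₗ
        (TensorProduct.tensorTensorTensorComm k H H H H).toLinearMap with hΞ₃
    have c2c : ∀ (t s : H ⊗[k] H),
        Ξ₁ (((TensorProduct.assoc k H H H) ((D.comul.rTensor H) t)) ⊗ₜ[k] s)
          = Ξ₃ (t ⊗ₜ[k] s) := by
      intro t s
      induction t using TensorProduct.induction_on with
      | zero => simp
      | tmul x y =>
          induction s using TensorProduct.induction_on with
          | zero => simp
          | tmul u v =>
              have sub : ∀ r : H ⊗[k] H,
                  Ξ₁ (((TensorProduct.assoc k H H H) (r ⊗ₜ[k] y)) ⊗ₜ[k] (u ⊗ₜ[k] v))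
                    = D.mul ((D.mul ((TensorProduct.map S D.mul)
                        ((TensorProduct.assoc k H H H) (r ⊗ₜ[k] u))))
                      ⊗ₜ[k] (S (D.mul (y ⊗ₜ[k] v)))) := by
                intro r
                induction r using TensorProduct.induction_on with
                | zero => simp
                | tmul p q => simp [hΞ₁]
                | add r1 r2 h1 h2 => simp only [add_tmul, map_add, h1, h2]
              have h1 := congrArg (fun F : H ⊗[k] H →ₗ[k] H => F (x ⊗ₜ[k] u)) hS.1
              simp only [LinearMap.comp_apply, LinearEquiv.coe_coe,
                LinearMap.rTensor_tmul] at h1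
              rw [LinearMap.rTensor_tmul, sub (D.comul x), h1]
              simp [hΞ₃, D.el_apply, smul_tmul', TensorProduct.tmul_smul]
          | add s1 s2 hs1 hs2 => simp only [tmul_add, map_add, hs1, hs2]
      | add t1 t2 ht1 ht2 =>
          simp only [map_add, add_tmul, ht1, ht2]
    -- c2d : collapse the counit
    set Φ : H ⊗[k] (H ⊗[k] H) →ₗ[k] H :=
      D.mul ∘ₗ LinearMap.lTensor H (S ∘ₗ D.mul) ∘ₗ
        LinearMap.lTensor H (TensorProduct.comm k H H).toLinearMap ∘ₗ
          (TensorProduct.assoc k H H H).toLinearMap ∘ₗ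
            (TensorProduct.comm k H (H ⊗[k] H)).toLinearMap with hΦ
    have c2d : ∀ (t s : H ⊗[k] H), Ξ₃ (t ⊗ₜ[k] s) = Φ ((D.εl t) ⊗ₜ[k] s) := by
      intro t s
      induction t using TensorProduct.induction_on with
      | zero => simp
      | tmul x y =>
          induction s using TensorProduct.induction_on with
          | zero => simp
          | tmul u v =>
              simp [hΞ₃, hΦ, D.el_apply, smul_tmul', TensorProduct.tmul_smul]
          | add s1 s2 hs1 hs2 => simp only [tmul_add, map_add, hs1, hs2]
      | add t1 t2 ht1 ht2 => simp only [add_tmul, map_add, ht1, ht2]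
    have c2e : ∀ s : H ⊗[k] H,
        Φ (h ⊗ₜ[k] s)
          = D.mul ((LinearMap.lTensor H (S ∘ₗ D.mul ∘ₗ TensorProduct.mk k H H h)) s) := by
      intro s
      induction s using TensorProduct.induction_on with
      | zero => simp
      | tmul u v => simp [hΦ]
      | add s1 s2 hs1 hs2 => simp only [tmul_add, map_add, hs1, hs2]
    rw [c2b, c2c, c2d, D.el_comul, c2e]
  rw [← hE2, hE1]

lemma el_lTensor (f' : H →ₗ[k] H) (t : H ⊗[k] H) :
    D.εl ((LinearMap.lTensor H f') t) = f' (D.εl t) := by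
  induction t using TensorProduct.induction_on with
  | zero => simp
  | tmul x y => simp [D.el_apply]
  | add a b ha hb => simp [ha, hb]

lemma er_comm_lTensor (f' : H →ₗ[k] H) (t : H ⊗[k] H) :
    (D.comul.rTensor H) ((LinearMap.lTensor H f') t) =
      (LinearMap.lTensor (H ⊗[k] H) f') ((D.comul.rTensor H) t) := by
  induction t using TensorProduct.induction_on with
  | zero => simp
  | tmul x y => simp
  | add a b ha hb => simp [ha, hb]

/-- The antipode of a Hopf quasigroup is antimultiplicative. -/
lemma lemma_AM (hS : D.IsAntipode S) (h g : H) :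
    S (D.mul (h ⊗ₜ[k] g)) = D.mul (S g ⊗ₜ[k] S h) := by
  classical
  set f : H →ₗ[k] H := S ∘ₗ D.mul ∘ₗ TensorProduct.mk k H H h with hf
  set Y : H ⊗[k] H := (LinearMap.lTensor H f) (D.comul g) with hY
  set F : H := D.mul ((TensorProduct.map S D.mul)
    ((TensorProduct.assoc k H H H) ((D.comul.rTensor H) Y))) with hF
  -- evaluation 1 : F = S (h g)
  have hF1 : F = S (D.mul (h ⊗ₜ[k] g)) := by
    have h1 := congrArg (fun F : H ⊗[k] H →ₗ[k] H => F Y) hS.1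
    simp only [LinearMap.comp_apply, LinearEquiv.coe_coe] at h1
    rw [hF, h1, hY, D.el_lTensor, D.el_comul]
    simp [hf]
  -- evaluation 2 : F = S g * S h
  have hF2 : F = D.mul (S g ⊗ₜ[k] S h) := by
    have s2 : (D.comul.rTensor H) (D.comul g) =
        (TensorProduct.assoc k H H H).symm ((LinearMap.lTensor H D.comul) (D.comul g)) := by
      rw [← D.coassoc_apply]; simp
    have s3 : ∀ z : H ⊗[k] (H ⊗[k] H),
        D.mul ((TensorProduct.map S D.mul) ((TensorProduct.assoc k H H H)
          ((LinearMap.lTensor (H ⊗[k] H) f) ((TensorProduct.assoc k H H H).symm z))))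
        = D.mul ((TensorProduct.map S (D.mul ∘ₗ LinearMap.lTensor H f)) z) := by
      intro z
      induction z using TensorProduct.induction_on with
      | zero => simp
      | tmul d w =>
          induction w using TensorProduct.induction_on with
          | zero => simp
          | tmul p q => simp
          | add w1 w2 h1 h2 => simp only [tmul_add, map_add, h1, h2]
      | add z1 z2 h1 h2 => simp only [map_add, h1, h2]
    have s4 : ∀ t : H ⊗[k] H,
        (TensorProduct.map S (D.mul ∘ₗ LinearMap.lTensor H f)) ((LinearMap.lTensor H D.comul) t)
          = (TensorProduct.map S (D.mul ∘ₗ LinearMap.lTensor H f ∘ₗ D.comul)) t := by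
      intro t
      induction t using TensorProduct.induction_on with
      | zero => simp
      | tmul x y => simp
      | add a b ha hb => simp [ha, hb]
    have s5 : ∀ t : H ⊗[k] H,
        D.mul ((TensorProduct.map S (D.mul ∘ₗ LinearMap.lTensor H f ∘ₗ D.comul)) t)
          = D.mul (S (D.εr t) ⊗ₜ[k] S h) := by
      intro t
      induction t using TensorProduct.induction_on with
      | zero => simp
      | tmul x y =>
          simp only [TensorProduct.map_tmul, LinearMap.comp_apply]
          rw [D.lemma_L1 S hS h y]
          simp [D.er_apply, smul_tmul', TensorProduct.tmul_smul]
      | add a b ha hb => simp only [map_add, add_tmul, ha, hb]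
    rw [hF, hY, D.er_comm_lTensor, s2, s3, s4, s5, D.er_comul]
  rw [← hF1, hF2]

/-- `Σ (u S⁻¹(y₂)) y₁ = ε(y) u` : `S⁻¹` is a right antipode for the co-opposite. -/
lemma lemma_T (hS : D.IsAntipode S) (Sinv : H →ₗ[k] H)
    (hSinv₁ : S ∘ₗ Sinv = LinearMap.id) (hSinv₂ : Sinv ∘ₗ S = LinearMap.id) (u y : H) :
    D.mul (((D.mul ∘ₗ LinearMap.lTensor H Sinv).rTensor H)
      ((TensorProduct.assoc k H H H).symm
        ((LinearMap.lTensor H (TensorProduct.comm k H H).toLinearMap)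
          (u ⊗ₜ[k] D.comul y))))
    = D.counit y • u := by
  classical
  have hS1p : ∀ a : H, S (Sinv a) = a := fun a =>
    congrArg (fun F : H →ₗ[k] H => F a) hSinv₁
  have hS2p : ∀ a : H, Sinv (S a) = a := fun a =>
    congrArg (fun F : H →ₗ[k] H => F a) hSinv₂
  have hinj : ∀ a b : H, S a = S b → a = b := by
    intro a b hab
    have := congrArg Sinv hab
    rwa [hS2p, hS2p] at this
  apply hinj
  have main : ∀ t : H ⊗[k] H,
      S (D.mul (((D.mul ∘ₗ LinearMap.lTensor H Sinv).rTensor H)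
        ((TensorProduct.assoc k H H H).symm
          ((LinearMap.lTensor H (TensorProduct.comm k H H).toLinearMap) (u ⊗ₜ[k] t)))))
      = D.mul ((TensorProduct.map S D.mul)
          ((TensorProduct.assoc k H H H) (t ⊗ₜ[k] S u))) := by
    intro t
    induction t using TensorProduct.induction_on with
    | zero => simp
    | tmul a b =>
        simp only [LinearMap.lTensor_tmul, LinearEquiv.coe_coe, TensorProduct.comm_tmul,
          TensorProduct.assoc_symm_tmul, LinearMap.rTensor_tmul, LinearMap.comp_apply,
          TensorProduct.assoc_tmul, TensorProduct.map_tmul]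
        rw [D.lemma_AM S hS, D.lemma_AM S hS, hS1p]
    | add t1 t2 h1 h2 => simp only [tmul_add, add_tmul, map_add, h1, h2]
  rw [main (D.comul y)]
  have h1 := congrArg (fun F : H ⊗[k] H →ₗ[k] H => F (y ⊗ₜ[k] S u)) hS.1
  simp only [LinearMap.comp_apply, LinearEquiv.coe_coe, LinearMap.rTensor_tmul] at h1
  rw [h1, D.el_apply, map_smul]

end HopfQuasigroupData

end AuxProofs

namespace HopfQuasigroupAut

variable {k H : Type*} [Field k] [AddCommGroup H] [Module k H]
  {D : HopfQuasigroupData k H} {S : H →ₗ[k] H}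

lemma lmap_invmap (α : HopfQuasigroupAut D S) (x : H) : α.lmap (α.invmap x) = x := by
  simp [lmap, invmap]

lemma invmap_lmap (α : HopfQuasigroupAut D S) (x : H) : α.invmap (α.lmap x) = x := by
  simp [lmap, invmap]

lemma comul_lmap (α : HopfQuasigroupAut D S) (x : H) :
    D.comul (α.lmap x) = TensorProduct.map α.lmap α.lmap (D.comul x) := by
  have := congrArg (fun F : H →ₗ[k] H ⊗[k] H => F x) α.map_comul
  simpa [lmap] using this

lemma counit_lmap (α : HopfQuasigroupAut D S) (x : H) :
    D.counit (α.lmap x) = D.counit x := by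
  have := congrArg (fun F : H →ₗ[k] k => F x) α.map_counit
  simpa [lmap] using this

lemma counit_invmap (α : HopfQuasigroupAut D S) (x : H) :
    D.counit (α.invmap x) = D.counit x := by
  conv_rhs => rw [← α.lmap_invmap x, α.counit_lmap]

lemma comul_invmap (α : HopfQuasigroupAut D S) (x : H) :
    D.comul (α.invmap x) = TensorProduct.map α.invmap α.invmap (D.comul x) := by
  conv_rhs => rw [← α.lmap_invmap x, α.comul_lmap]
  generalize D.comul (α.invmap x) = t
  induction t using TensorProduct.induction_on with
  | zero => simp
  | tmul a b => simp only [TensorProduct.map_tmul, α.invmap_lmap]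
  | add a b ha hb => simp only [map_add, ← ha, ← hb]

lemma antipode_lmap (α : HopfQuasigroupAut D S) (x : H) :
    S (α.lmap x) = α.lmap (S x) := by
  have := congrArg (fun F : H →ₗ[k] H => F x) α.comm_antipode
  simpa [lmap] using this.symm

lemma antipode_invmap (α : HopfQuasigroupAut D S) (x : H) :
    S (α.invmap x) = α.invmap (S x) := by
  conv_rhs => rw [← α.lmap_invmap x]
  rw [α.antipode_lmap, α.invmap_lmap]

lemma sinv_lmap (α : HopfQuasigroupAut D S) (Sinv : H →ₗ[k] H)
    (hSinv₁ : S ∘ₗ Sinv = LinearMap.id) (hSinv₂ : Sinv ∘ₗ S = LinearMap.id) (x : H) :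
    Sinv (α.lmap x) = α.lmap (Sinv x) := by
  have hS1p : ∀ a : H, S (Sinv a) = a := fun a => congrArg (fun F : H →ₗ[k] H => F a) hSinv₁
  have hS2p : ∀ a : H, Sinv (S a) = a := fun a => congrArg (fun F : H →ₗ[k] H => F a) hSinv₂
  conv_rhs => rw [← hS2p (α.lmap (Sinv x)), α.antipode_lmap, hS1p]

lemma sinv_invmap (α : HopfQuasigroupAut D S) (Sinv : H →ₗ[k] H)
    (hSinv₁ : S ∘ₗ Sinv = LinearMap.id) (hSinv₂ : Sinv ∘ₗ S = LinearMap.id) (x : H) :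
    Sinv (α.invmap x) = α.invmap (Sinv x) := by
  have hS1p : ∀ a : H, S (Sinv a) = a := fun a => congrArg (fun F : H →ₗ[k] H => F a) hSinv₁
  have hS2p : ∀ a : H, Sinv (S a) = a := fun a => congrArg (fun F : H →ₗ[k] H => F a) hSinv₂
  conv_rhs => rw [← hS2p (α.invmap (Sinv x)), α.antipode_invmap, hS1p]

end HopfQuasigroupAut
section KeyLemma

open TensorProduct LinearMap

variable {k H M : Type*} [Field k] [AddCommGroup H] [Module k H]
  [AddCommGroup M] [Module k M]

/-- The "un-comultiplied" guts of the `ᴹN ⊗ M`-side composite. -/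
noncomputable def J1 (D : HopfQuasigroupData k H) (βi φm : H →ₗ[k] H)
    (actM : H ⊗[k] M →ₗ[k] M) (coactM : M →ₗ[k] M ⊗[k] H) :
    (H ⊗[k] H) ⊗[k] M →ₗ[k] M ⊗[k] H :=
  LinearMap.lTensor M D.mul ∘ₗ (TensorProduct.assoc k M H H).toLinearMap ∘ₗ
    TensorProduct.map ((coactM ∘ₗ actM) ∘ₗ βi.rTensor M) φm ∘ₗ
      (TensorProduct.assoc k H M H).symm.toLinearMap ∘ₗ
        LinearMap.lTensor H (TensorProduct.comm k H M).toLinearMap ∘ₗ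
          (TensorProduct.assoc k H H M).toLinearMap ∘ₗ
            LinearMap.rTensor M (TensorProduct.comm k H H).toLinearMap

/-- The "un-comultiplied" guts of the `M ⊗ N`-side composite. -/
noncomputable def J2 (D : HopfQuasigroupData k H) (βi : H →ₗ[k] H)
    (actM : H ⊗[k] M →ₗ[k] M) (coactM : M →ₗ[k] M ⊗[k] H) :
    (H ⊗[k] H) ⊗[k] M →ₗ[k] M ⊗[k] H :=
  TensorProduct.map (actM ∘ₗ βi.rTensor M) D.mul ∘ₗ
    (TensorProduct.tensorTensorTensorComm k H H M H).toLinearMap ∘ₗ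
      LinearMap.lTensor (H ⊗[k] H) coactM

lemma keyK (D : HopfQuasigroupData k H) (S : H →ₗ[k] H)
    (hS : D.IsAntipode S) (Sinv : H →ₗ[k] H) (hSinv₁ : S ∘ₗ Sinv = LinearMap.id)
    (hSinv₂ : Sinv ∘ₗ S = LinearMap.id)
    (α β : HopfQuasigroupAut D S)
    (actM : H ⊗[k] M →ₗ[k] M) (coactM : M →ₗ[k] M ⊗[k] H)
    (hMyd : YDCompat D Sinv α.lmap β.lmap actM coactM) (h : H) (m : M) :
    J1 D β.invmap (α.lmap ∘ₗ β.invmap) actM coactM ((D.comul h) ⊗ₜ[k] m)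
      = J2 D β.invmap actM coactM ((D.comul h) ⊗ₜ[k] m) := by
  classical
  unfold YDCompat at hMyd
  set Θμ : (H ⊗[k] H) ⊗[k] H →ₗ[k] H :=
    D.mul ∘ₗ TensorProduct.map (D.mul ∘ₗ β.lmap.rTensor H) (α.lmap ∘ₗ Sinv) with hΘμ
  set YD : H ⊗[k] M →ₗ[k] M ⊗[k] H :=
    TensorProduct.map actM Θμ ∘ₗ
      ydShuffle k H M ∘ₗ coactM.lTensor (H ⊗[k] (H ⊗[k] H)) ∘ₗ
        (D.comul.lTensor H).rTensor M ∘ₗ D.comul.rTensor M with hYD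
  set Ψ : (H ⊗[k] (H ⊗[k] (H ⊗[k] H))) ⊗[k] (M ⊗[k] H) →ₗ[k] M ⊗[k] H :=
    LinearMap.lTensor M D.mul ∘ₗ (TensorProduct.assoc k M H H).toLinearMap ∘ₗ
      TensorProduct.map (TensorProduct.map actM Θμ ∘ₗ ydShuffle k H M)
          (α.lmap ∘ₗ β.invmap) ∘ₗ
        (TensorProduct.comm k H
            ((H ⊗[k] (H ⊗[k] H)) ⊗[k] (M ⊗[k] H))).toLinearMap ∘ₗ
          (TensorProduct.assoc k H (H ⊗[k] (H ⊗[k] H)) (M ⊗[k] H)).toLinearMap with hΨ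
  have hcommβ : ∀ r : H ⊗[k] H,
      (LinearMap.lTensor H D.comul) ((TensorProduct.map β.invmap β.invmap) r)
        = (TensorProduct.map β.invmap (TensorProduct.map β.invmap β.invmap))
            ((LinearMap.lTensor H D.comul) r) := by
    intro r
    induction r using TensorProduct.induction_on with
    | zero => simp
    | tmul a b => simp [β.comul_invmap]
    | add a b ha hb => simp [ha, hb]
  -- step 1 : unfold the J1 side into Ψ applied to the triple comultiplication
  have e1 : ∀ t : H ⊗[k] H,
      (LinearMap.lTensor M D.mul) ((TensorProduct.assoc k M H H)
        ((TensorProduct.map (YD ∘ₗ β.invmap.rTensor M) (α.lmap ∘ₗ β.invmap))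
          ((TensorProduct.assoc k H M H).symm
            ((LinearMap.lTensor H (TensorProduct.comm k H M).toLinearMap)
              ((TensorProduct.assoc k H H M)
                ((LinearMap.rTensor M (TensorProduct.comm k H H).toLinearMap)
                  (t ⊗ₜ[k] m)))))))
      = Ψ (((LinearMap.lTensor H
            (TensorProduct.map β.invmap (TensorProduct.map β.invmap β.invmap) ∘ₗ
              LinearMap.lTensor H D.comul ∘ₗ D.comul)) t) ⊗ₜ[k] (coactM m)) := by
    intro t
    induction t using TensorProduct.induction_on with
    | zero => simp
    | tmul x y =>
        simp only [hYD, hΨ, LinearMap.rTensor_tmul, LinearEquiv.coe_coe,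
          TensorProduct.comm_tmul, TensorProduct.assoc_tmul, LinearMap.lTensor_tmul,
          TensorProduct.assoc_symm_tmul, TensorProduct.map_tmul, LinearMap.comp_apply]
        rw [β.comul_invmap y, hcommβ]
    | add a b ha hb => simp only [add_tmul, map_add, ha, hb]
  -- step 2 : coassociativity in the form (1 ⊗ (1 ⊗ Δ)Δ)Δ = assoc ∘ (Δ ⊗ Δ)Δ
  have c3a : ∀ u : (H ⊗[k] H) ⊗[k] H,
      (LinearMap.lTensor H (LinearMap.lTensor H D.comul)) ((TensorProduct.assoc k H H H) u)
        = (TensorProduct.assoc k H H (H ⊗[k] H))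
            ((LinearMap.lTensor (H ⊗[k] H) D.comul) u) := by
    intro u
    induction u using TensorProduct.induction_on with
    | zero => simp
    | tmul w r =>
        induction w using TensorProduct.induction_on with
        | zero => simp
        | tmul p q => simp
        | add a b ha hb => simp only [add_tmul, map_add, ha, hb]
    | add a b ha hb => simp only [map_add, ha, hb]
  have c3b : ∀ t : H ⊗[k] H,
      (LinearMap.lTensor (H ⊗[k] H) D.comul) ((D.comul.rTensor H) t)
        = (TensorProduct.map D.comul D.comul) t := by
    intro t
    induction t using TensorProduct.induction_on with
    | zero => simp
    | tmul a b => simp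
    | add a b ha hb => simp [ha, hb]
  have c3 : (LinearMap.lTensor H ((LinearMap.lTensor H D.comul) ∘ₗ D.comul)) (D.comul h)
      = (TensorProduct.assoc k H H (H ⊗[k] H))
          ((TensorProduct.map D.comul D.comul) (D.comul h)) := by
    rw [← c3b (D.comul h), ← c3a ((D.comul.rTensor H) (D.comul h)), D.coassoc_apply]
    rw [LinearMap.lTensor_comp, LinearMap.comp_apply]
  -- step 3 : the crucial cancellation via lemma_T
  have e3a1 : ∀ (r : H ⊗[k] H) (b₁ b₂ : H) (m₀ : M) (m₁ : H),
      Ψ (((LinearMap.lTensor H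
            (TensorProduct.map β.invmap (TensorProduct.map β.invmap β.invmap)))
          ((TensorProduct.assoc k H H (H ⊗[k] H)) (r ⊗ₜ[k] (b₁ ⊗ₜ[k] b₂))))
        ⊗ₜ[k] (m₀ ⊗ₜ[k] m₁))
      = actM ((β.invmap b₁) ⊗ₜ[k] m₀) ⊗ₜ[k]
          (D.mul (((D.mul ∘ₗ LinearMap.lTensor H Sinv).rTensor H)
            ((TensorProduct.assoc k H H H).symm
              ((LinearMap.lTensor H (TensorProduct.comm k H H).toLinearMap)
                ((D.mul (b₂ ⊗ₜ[k] m₁)) ⊗ₜ[k]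
                  ((TensorProduct.map (α.lmap ∘ₗ β.invmap) (α.lmap ∘ₗ β.invmap)) r)))))) := by
    intro r b₁ b₂ m₀ m₁
    induction r using TensorProduct.induction_on with
    | zero => simp
    | tmul a₁ a₂ =>
        simp only [hΨ, hΘμ, TensorProduct.assoc_tmul, LinearMap.lTensor_tmul,
          TensorProduct.map_tmul, LinearMap.comp_apply, LinearEquiv.coe_coe,
          TensorProduct.comm_tmul, TensorProduct.assoc_symm_tmul, LinearMap.rTensor_tmul,
          ydShuffle, TensorProduct.tensorTensorTensorComm_tmul]
        rw [β.lmap_invmap, ← α.sinv_lmap Sinv hSinv₁ hSinv₂ (β.invmap a₂)]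
    | add a b ha hb => simp only [add_tmul, map_add, tmul_add, ha, hb]
  have hφcomul : ∀ a : H,
      (TensorProduct.map (α.lmap ∘ₗ β.invmap) (α.lmap ∘ₗ β.invmap)) (D.comul a)
        = D.comul (α.lmap (β.invmap a)) := by
    intro a
    rw [α.comul_lmap, β.comul_invmap]
    generalize D.comul a = t
    induction t using TensorProduct.induction_on with
    | zero => simp
    | tmul x y => simp
    | add x y hx hy => simp only [map_add, hx, hy]
  have e3a : ∀ (a : H) (s : H ⊗[k] H) (p : M ⊗[k] H),
      Ψ (((LinearMap.lTensor H
            (TensorProduct.map β.invmap (TensorProduct.map β.invmap β.invmap)))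
          ((TensorProduct.assoc k H H (H ⊗[k] H)) ((D.comul a) ⊗ₜ[k] s))) ⊗ₜ[k] p)
      = D.counit a • ((TensorProduct.map (actM ∘ₗ β.invmap.rTensor M) D.mul)
          ((TensorProduct.tensorTensorTensorComm k H H M H) (s ⊗ₜ[k] p))) := by
    intro a s p
    induction s using TensorProduct.induction_on with
    | zero => simp
    | tmul b₁ b₂ =>
        induction p using TensorProduct.induction_on with
        | zero => simp
        | tmul m₀ m₁ =>
            rw [e3a1 (D.comul a) b₁ b₂ m₀ m₁, hφcomul a,
              D.lemma_T S hS Sinv hSinv₁ hSinv₂ (D.mul (b₂ ⊗ₜ[k] m₁)) (α.lmap (β.invmap a)),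
              α.counit_lmap, β.counit_invmap]
            simp [smul_tmul', TensorProduct.tmul_smul]
        | add p1 p2 h1 h2 => simp only [tmul_add, map_add, h1, h2, smul_add]
    | add s1 s2 h1 h2 =>
        simp only [add_tmul, tmul_add, map_add, h1, h2, smul_add]
  -- step 4 : collapse the counit
  have e4 : ∀ (t : H ⊗[k] H) (p : M ⊗[k] H),
      Ψ (((LinearMap.lTensor H
            (TensorProduct.map β.invmap (TensorProduct.map β.invmap β.invmap)))
          ((TensorProduct.assoc k H H (H ⊗[k] H))
            ((TensorProduct.map D.comul D.comul) t))) ⊗ₜ[k] p)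
      = (TensorProduct.map (actM ∘ₗ β.invmap.rTensor M) D.mul)
          ((TensorProduct.tensorTensorTensorComm k H H M H)
            ((D.comul (D.εl t)) ⊗ₜ[k] p)) := by
    intro t p
    induction t using TensorProduct.induction_on with
    | zero => simp
    | tmul a b =>
        rw [TensorProduct.map_tmul, e3a a (D.comul b) p, D.el_apply, map_smul,
          ← TensorProduct.smul_tmul', map_smul, map_smul]
    | add a b ha hb => simp only [map_add, add_tmul, ha, hb]
  -- assemble
  unfold J1 J2
  rw [hMyd]
  simp only [LinearMap.comp_apply, LinearEquiv.coe_coe]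
  rw [e1 (D.comul h), LinearMap.lTensor_comp_apply, c3, e4 (D.comul h) (coactM m),
    D.el_comul, LinearMap.lTensor_tmul]

end KeyLemma
section OuterDefs

open TensorProduct LinearMap

variable {k H M N : Type*} [Field k] [AddCommGroup H] [Module k H]
  [AddCommGroup M] [Module k M] [AddCommGroup N] [Module k N]

/-- Wrapper shuffling an `N`-spectator around a map `(H ⊗ H) ⊗ M → M ⊗ H`. -/
noncomputable def XiOut (J : (H ⊗[k] H) ⊗[k] M →ₗ[k] M ⊗[k] H) :
    ((N ⊗[k] H) ⊗[k] H) ⊗[k] M →ₗ[k] (N ⊗[k] M) ⊗[k] H :=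
  (TensorProduct.assoc k N M H).symm.toLinearMap ∘ₗ LinearMap.lTensor N J ∘ₗ
    (TensorProduct.assoc k N (H ⊗[k] H) M).toLinearMap ∘ₗ
      (TensorProduct.assoc k N H H).toLinearMap.rTensor M

/-- The exposed form of `XiOut J1`. -/
noncomputable def XiL5 (D : HopfQuasigroupData k H) (φm : H →ₗ[k] H) :
    (N ⊗[k] H) ⊗[k] (M ⊗[k] H) →ₗ[k] (N ⊗[k] M) ⊗[k] H :=
  (TensorProduct.assoc k N M H).symm.toLinearMap ∘ₗ
    LinearMap.lTensor N
      (LinearMap.lTensor M D.mul ∘ₗ (TensorProduct.assoc k M H H).toLinearMap ∘ₗ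
        LinearMap.lTensor (M ⊗[k] H) φm ∘ₗ
          (TensorProduct.comm k H (M ⊗[k] H)).toLinearMap) ∘ₗ
      (TensorProduct.assoc k N H (M ⊗[k] H)).toLinearMap

/-- The exposed form of `XiOut J2`. -/
noncomputable def XiR4 (D : HopfQuasigroupData k H) (βi : H →ₗ[k] H)
    (actM : H ⊗[k] M →ₗ[k] M) :
    ((N ⊗[k] H) ⊗[k] H) ⊗[k] (M ⊗[k] H) →ₗ[k] (N ⊗[k] M) ⊗[k] H :=
  (TensorProduct.assoc k N M H).symm.toLinearMap ∘ₗ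
    LinearMap.lTensor N
      (TensorProduct.map (actM ∘ₗ βi.rTensor M) D.mul ∘ₗ
        (TensorProduct.tensorTensorTensorComm k H H M H).toLinearMap) ∘ₗ
      LinearMap.lTensor N (TensorProduct.assoc k H H (M ⊗[k] H)).symm.toLinearMap ∘ₗ
        (TensorProduct.assoc k N H (H ⊗[k] (M ⊗[k] H))).toLinearMap ∘ₗ
          (TensorProduct.assoc k (N ⊗[k] H) H (M ⊗[k] H)).toLinearMap

end OuterDefs

section OuterLemmas

open TensorProduct LinearMap

variable {k H M N : Type*} [Field k] [AddCommGroup H] [Module k H]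
  [AddCommGroup M] [Module k M] [AddCommGroup N] [Module k N]

set_option maxHeartbeats 1000000 in
lemma xiJ1_lem (D : HopfQuasigroupData k H) (βi φm : H →ₗ[k] H)
    (actM : H ⊗[k] M →ₗ[k] M) (coactM : M →ₗ[k] M ⊗[k] H) (m : M)
    (qq : N ⊗[k] H) (c : H) :
    XiOut (J1 D βi φm actM coactM) ((qq ⊗ₜ[k] c) ⊗ₜ[k] m)
      = XiL5 D φm (qq ⊗ₜ[k] (coactM (actM ((βi c) ⊗ₜ[k] m)))) := by
  induction qq using TensorProduct.induction_on with
  | zero => simp only [zero_tmul, map_zero]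
  | tmul n' d =>
      simp only [XiOut, XiL5, J1, LinearMap.comp_apply, LinearEquiv.coe_coe,
        LinearMap.rTensor_tmul, TensorProduct.assoc_tmul, LinearMap.lTensor_tmul,
        TensorProduct.map_tmul, TensorProduct.comm_tmul, TensorProduct.assoc_symm_tmul]
  | add a b ha hb => simp only [add_tmul, map_add, ha, hb]

set_option maxHeartbeats 1000000 in
lemma xiJ2_lem (D : HopfQuasigroupData k H) (βi : H →ₗ[k] H)
    (actM : H ⊗[k] M →ₗ[k] M) (coactM : M →ₗ[k] M ⊗[k] H) (m : M)
    (qq : N ⊗[k] H) (c : H) :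
    XiOut (J2 D βi actM coactM) ((qq ⊗ₜ[k] c) ⊗ₜ[k] m)
      = XiR4 D βi actM ((qq ⊗ₜ[k] c) ⊗ₜ[k] (coactM m)) := by
  induction qq using TensorProduct.induction_on with
  | zero => simp only [zero_tmul, map_zero]
  | tmul n' d =>
      simp only [XiOut, XiR4, J2, LinearMap.comp_apply, LinearEquiv.coe_coe,
        LinearMap.rTensor_tmul, TensorProduct.assoc_tmul, LinearMap.lTensor_tmul,
        TensorProduct.map_tmul, TensorProduct.comm_tmul, TensorProduct.assoc_symm_tmul]
  | add a b ha hb => simp only [add_tmul, map_add, ha, hb]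

set_option maxHeartbeats 1000000 in
lemma oL_lem (D : HopfQuasigroupData k H) (βi φm : H →ₗ[k] H)
    (actM : H ⊗[k] M →ₗ[k] M) (coactM : M →ₗ[k] M ⊗[k] H)
    (coactN : N →ₗ[k] N ⊗[k] H) (m : M) (q : N ⊗[k] H) :
    (LinearMap.lTensor (N ⊗[k] M) (D.mul ∘ₗ (TensorProduct.comm k H H).toLinearMap))
        ((TensorProduct.tensorTensorTensorComm k N H M H)
          ((TensorProduct.map (φm.lTensor N ∘ₗ coactN) coactM)
            ((LinearMap.lTensor N (actM ∘ₗ βi.rTensor M))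
              ((TensorProduct.assoc k N H M) (q ⊗ₜ[k] m)))))
      = XiOut (J1 D βi φm actM coactM) (((coactN.rTensor H) q) ⊗ₜ[k] m) := by
  induction q using TensorProduct.induction_on with
  | zero => simp only [zero_tmul, map_zero]
  | tmul n' c =>
      rw [LinearMap.rTensor_tmul, xiJ1_lem D βi φm actM coactM m (coactN n') c]
      simp only [LinearMap.comp_apply, LinearEquiv.coe_coe,
        TensorProduct.assoc_tmul, LinearMap.lTensor_tmul, LinearMap.rTensor_tmul,
        TensorProduct.map_tmul]
      generalize coactM (actM ((βi c) ⊗ₜ[k] m)) = ww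
      generalize coactN n' = qq
      induction qq using TensorProduct.induction_on with
      | zero => simp only [zero_tmul, map_zero, tmul_zero]
      | tmul n₀ c₀ =>
          induction ww using TensorProduct.induction_on with
          | zero => simp only [zero_tmul, map_zero, tmul_zero]
          | tmul w₀ w₁ =>
              simp only [XiL5, LinearMap.comp_apply, LinearEquiv.coe_coe,
                TensorProduct.tensorTensorTensorComm_tmul, TensorProduct.assoc_tmul,
                LinearMap.lTensor_tmul, TensorProduct.comm_tmul,
                TensorProduct.assoc_symm_tmul, TensorProduct.map_tmul]
          | add a b ha hb => simp only [tmul_add, map_add, ha, hb]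
      | add a b ha hb => simp only [add_tmul, map_add, ha, hb]
  | add a b ha hb => simp only [add_tmul, map_add, ha, hb]

set_option maxHeartbeats 1000000 in
lemma oR_lem (D : HopfQuasigroupData k H) (βi : H →ₗ[k] H)
    (actM : H ⊗[k] M →ₗ[k] M) (coactM : M →ₗ[k] M ⊗[k] H)
    (coactN : N →ₗ[k] N ⊗[k] H) (m : M) (q : N ⊗[k] H) :
    (braiding k M N βi actM coactN).rTensor H
        ((LinearMap.lTensor (M ⊗[k] N) (D.mul ∘ₗ (TensorProduct.comm k H H).toLinearMap))
          ((TensorProduct.tensorTensorTensorComm k M H N H) ((coactM m) ⊗ₜ[k] q)))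
      = XiOut (J2 D βi actM coactM) (((coactN.rTensor H) q) ⊗ₜ[k] m) := by
  induction q using TensorProduct.induction_on with
  | zero => simp only [tmul_zero, zero_tmul, map_zero]
  | tmul n₀ c =>
      rw [LinearMap.rTensor_tmul, xiJ2_lem D βi actM coactM m (coactN n₀) c]
      generalize coactM m = pp
      induction pp using TensorProduct.induction_on with
      | zero => simp only [tmul_zero, zero_tmul, map_zero]
      | tmul m₀ m₁ =>
          simp only [TensorProduct.tensorTensorTensorComm_tmul, LinearMap.lTensor_tmul,
            LinearMap.comp_apply, LinearEquiv.coe_coe, TensorProduct.comm_tmul,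
            LinearMap.rTensor_tmul, braiding]
          generalize coactN n₀ = qq
          induction qq using TensorProduct.induction_on with
          | zero => simp only [tmul_zero, zero_tmul, map_zero]
          | tmul n' d =>
              simp only [XiR4, LinearMap.comp_apply, LinearEquiv.coe_coe,
                TensorProduct.assoc_tmul, LinearMap.lTensor_tmul,
                TensorProduct.assoc_symm_tmul, TensorProduct.map_tmul,
                TensorProduct.tensorTensorTensorComm_tmul, LinearMap.rTensor_tmul]
          | add a b ha hb => simp only [add_tmul, map_add, ha, hb]
      | add a b ha hb => simp only [tmul_add, add_tmul, map_add, ha, hb]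
  | add a b ha hb => simp only [tmul_add, add_tmul, map_add, ha, hb]

set_option maxHeartbeats 1000000 in
lemma xiGen_lem (J : (H ⊗[k] H) ⊗[k] M →ₗ[k] M ⊗[k] H) (m : M) (n' : N) (r : H ⊗[k] H) :
    XiOut (N := N) J (((TensorProduct.assoc k N H H).symm (n' ⊗ₜ[k] r)) ⊗ₜ[k] m)
      = (TensorProduct.assoc k N M H).symm (n' ⊗ₜ[k] (J (r ⊗ₜ[k] m))) := by
  induction r using TensorProduct.induction_on with
  | zero => simp only [tmul_zero, zero_tmul, map_zero]
  | tmul c h =>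
      simp only [XiOut, LinearMap.comp_apply, LinearEquiv.coe_coe,
        TensorProduct.assoc_symm_tmul, LinearMap.rTensor_tmul, TensorProduct.assoc_tmul,
        LinearMap.lTensor_tmul]
  | add a b ha hb =>
      simp only [tmul_add, add_tmul, map_add, ha, hb]

end OuterLemmas
section Statement16

variable {k H M N : Type*} [Field k] [AddCommGroup H] [Module k H]
  [AddCommGroup M] [Module k M] [AddCommGroup N] [Module k N]

/-- The coaction of `H` on a tensor product: `x ⊗ y ↦ (x₀ ⊗ y₀) ⊗ y₁x₁`. -/
noncomputable def tensorCoact {M N : Type*} [AddCommGroup M] [Module k M]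
    [AddCommGroup N] [Module k N] (D : HopfQuasigroupData k H)
    (coactM : M →ₗ[k] M ⊗[k] H) (coactN : N →ₗ[k] N ⊗[k] H) :
    M ⊗[k] N →ₗ[k] (M ⊗[k] N) ⊗[k] H :=
  (D.mul ∘ₗ (TensorProduct.comm k H H).toLinearMap).lTensor (M ⊗[k] N) ∘ₗ
    (TensorProduct.tensorTensorTensorComm k M H N H).toLinearMap ∘ₗ
      TensorProduct.map coactM coactN

set_option maxHeartbeats 1000000 in
/-- For `M ∈ 𝒞_H(α,β)` and `N ∈ 𝒞_H(γ,δ)`, the braiding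
`c_{M,N}(m ⊗ n) = n₀ ⊗ β⁻¹(n₁)·m` is a morphism of right `H`-comodules, where `M ⊗ N`
carries the coaction `m ⊗ n ↦ (m₀ ⊗ n₀) ⊗ n₁m₁` and `ᴹN ⊗ M` carries the analogous
coaction built from the deformed coaction `n ↦ n₀ ⊗ αβ⁻¹(n₁)` on `ᴹN`. -/
theorem braiding_comodule_map (D : HopfQuasigroupData k H) (S : H →ₗ[k] H)
    (hS : D.IsAntipode S) (Sinv : H →ₗ[k] H) (hSinv₁ : S ∘ₗ Sinv = LinearMap.id)
    (hSinv₂ : Sinv ∘ₗ S = LinearMap.id)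
    (α β γ δ : HopfQuasigroupAut D S)
    (actM : H ⊗[k] M →ₗ[k] M) (coactM : M →ₗ[k] M ⊗[k] H)
    (actN : H ⊗[k] N →ₗ[k] N) (coactN : N →ₗ[k] N ⊗[k] H)
    (hMq : IsQuasimodule D S actM) (hMc : IsComodule D coactM)
    (hMyd : YDCompat D Sinv α.lmap β.lmap actM coactM)
    (hNq : IsQuasimodule D S actN) (hNc : IsComodule D coactN)
    (hNyd : YDCompat D Sinv γ.lmap δ.lmap actN coactN) :
    tensorCoact D ((α.lmap ∘ₗ β.invmap).lTensor N ∘ₗ coactN) coactM ∘ₗ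
        braiding k M N β.invmap actM coactN =
      (braiding k M N β.invmap actM coactN).rTensor H ∘ₗ tensorCoact D coactM coactN := by
  classical
  apply TensorProduct.ext'
  intro m n
  have hNc2p : (coactN.rTensor H) (coactN n)
      = (TensorProduct.assoc k N H H).symm ((LinearMap.lTensor N D.comul) (coactN n)) := by
    have := congrArg (fun F : N →ₗ[k] (N ⊗[k] H) ⊗[k] H => F n) hNc.2
    simpa using this
  have glue : ∀ q : N ⊗[k] H,
      XiOut (J1 D β.invmap (α.lmap ∘ₗ β.invmap) actM coactM)
          (((TensorProduct.assoc k N H H).symm ((LinearMap.lTensor N D.comul) q)) ⊗ₜ[k] m)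
        = XiOut (J2 D β.invmap actM coactM)
            (((TensorProduct.assoc k N H H).symm
              ((LinearMap.lTensor N D.comul) q)) ⊗ₜ[k] m) := by
    intro q
    induction q using TensorProduct.induction_on with
    | zero => simp only [map_zero, zero_tmul]
    | tmul n' h =>
        rw [LinearMap.lTensor_tmul, xiGen_lem _ m n' (D.comul h),
          xiGen_lem _ m n' (D.comul h),
          keyK D S hS Sinv hSinv₁ hSinv₂ α β actM coactM hMyd h m]
    | add a b ha hb => simp only [map_add, add_tmul, ha, hb]
  have hbr : braiding k M N β.invmap actM coactN (m ⊗ₜ[k] n)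
      = (LinearMap.lTensor N (actM ∘ₗ β.invmap.rTensor M))
          ((TensorProduct.assoc k N H M) ((coactN n) ⊗ₜ[k] m)) := by
    simp only [braiding, LinearMap.comp_apply, LinearEquiv.coe_coe,
      TensorProduct.comm_tmul, LinearMap.rTensor_tmul]
  have htc : tensorCoact D coactM coactN (m ⊗ₜ[k] n)
      = (LinearMap.lTensor (M ⊗[k] N) (D.mul ∘ₗ (TensorProduct.comm k H H).toLinearMap))
          ((TensorProduct.tensorTensorTensorComm k M H N H)
            ((coactM m) ⊗ₜ[k] (coactN n))) := by
    simp only [tensorCoact, LinearMap.comp_apply, LinearEquiv.coe_coe,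
      TensorProduct.map_tmul]
  have htc2 : ∀ X : N ⊗[k] M,
      tensorCoact D ((α.lmap ∘ₗ β.invmap).lTensor N ∘ₗ coactN) coactM X
        = (LinearMap.lTensor (N ⊗[k] M) (D.mul ∘ₗ (TensorProduct.comm k H H).toLinearMap))
            ((TensorProduct.tensorTensorTensorComm k N H M H)
              ((TensorProduct.map ((α.lmap ∘ₗ β.invmap).lTensor N ∘ₗ coactN) coactM) X)) :=
    fun X => rfl
  rw [LinearMap.comp_apply, LinearMap.comp_apply, hbr, htc2,
    oL_lem D β.invmap (α.lmap ∘ₗ β.invmap) actM coactM coactN m (coactN n), htc,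
    oR_lem D β.invmap actM coactM coactN m (coactN n), hNc2p, glue (coactN n)]

end Statement16
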